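/- For every N ≥ 0, no optimal palindromic decomposition of the prefix of the Thue-Morse word of length 4N + 1 ends with a palindrome of length 3: if the prefix of t of length 4N+1 equals a concatenation p_1⋯p_k of nonempty palindromes with k = PPL_t(4N+1), then the length of p_k is not 3. -/

import Mathlib

/-- The Thue–Morse word: `tm n` is the number of ones (sum of binary digits)
in the binary expansion of `n`, taken mod 2. -/
def tm (n : ℕ) : ℕ := (Nat.digits 2 n).sum % 2

/-- `ps` is a factorization of the finite word `w` into nonempty palindromes. -/
def IsPalDecomp (w : List ℕ) (ps : List (List ℕ)) : Prop :=
  ps.flatten = w ∧ ∀ p ∈ ps, p ≠ [] ∧ p.Palindrome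

/-- The palindromic length of a finite word: the least number of nonempty
palindromes whose concatenation is the word (0 for the empty word). -/
noncomputable def palLen (w : List ℕ) : ℕ :=
  sInf {k | ∃ ps, ps.length = k ∧ IsPalDecomp w ps}

/-- `pplTM n` is the palindromic length of the prefix of length `n`
of the Thue–Morse word. -/
noncomputable def pplTM (n : ℕ) : ℕ := palLen ((List.range n).map tm)

/-!
Write `P(n)` for the palindromic length of the prefix of length `n`. If an optimal decomposition
of the prefix of length `4N + 1` ended with a palindrome of length 3, the prefix of length `4N - 2`
would split into `P(4N + 1) - 1 ≤ P(4N) ≤ P(N)` palindromes; here `P(4N) ≤ P(N)` because the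
morphism `0 ↦ 0110, 1 ↦ 1001` fixes `t` and maps palindromes to palindromes. Together with
`P(N) ≤ P(N - 1) + 1` this contradicts `P(4n + 2) ≥ min(P(n), P(n + 1)) + 2`.

That inequality is one case of `P(k) ≥ pplRec k`, proved by strong induction on `k` by removing the
last palindrome of a decomposition. If its length is odd, it is 1 or 3, as `t` has no palindromic
factor of length 5. If it is even, the palindrome is centred at an even position, because a square
`aa` occurs in `t` only at odd positions; so up to at most three letters at each end it is the
image under the morphism of a palindromic factor `t(a) … t(n-1)`, and `P(n) ≤ P(a) + 1`.
-/

lemma tm_le_one (n : ℕ) : tm n ≤ 1 :=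
  Nat.lt_succ_iff.mp (Nat.mod_lt _ two_pos)

lemma tm_two_mul (n : ℕ) : tm (2 * n) = tm n := by
  rcases Nat.eq_zero_or_pos n with rfl | hn
  · rfl
  · rw [tm, Nat.digits_def' one_lt_two (by omega)]
    simp [tm, Nat.mul_div_cancel_left _ two_pos]

lemma tm_two_mul_add_one (n : ℕ) : tm (2 * n + 1) = 1 - tm n := by
  rw [tm, Nat.digits_def' one_lt_two (by omega), List.sum_cons,
    show (2 * n + 1) % 2 = 1 by omega, show (2 * n + 1) / 2 = n by omega]
  have := Nat.mod_lt (Nat.digits 2 n).sum two_pos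
  unfold tm
  omega

lemma tm_four_mul (n : ℕ) : tm (4 * n) = tm n := by
  rw [show 4 * n = 2 * (2 * n) by ring, tm_two_mul, tm_two_mul]

lemma tm_four_mul_add_one (n : ℕ) : tm (4 * n + 1) = 1 - tm n := by
  rw [show 4 * n + 1 = 2 * (2 * n) + 1 by ring, tm_two_mul_add_one, tm_two_mul]

lemma tm_four_mul_add_two (n : ℕ) : tm (4 * n + 2) = 1 - tm n := by
  rw [show 4 * n + 2 = 2 * (2 * n + 1) by ring, tm_two_mul, tm_two_mul_add_one]

lemma tm_four_mul_add_three (n : ℕ) : tm (4 * n + 3) = tm n := by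
  rw [show 4 * n + 3 = 2 * (2 * n + 1) + 1 by ring, tm_two_mul_add_one, tm_two_mul_add_one]
  have := tm_le_one n
  omega

/-- The block `t(4n) … t(4n+3)` is the palindrome `x x̄ x̄ x` with `x = t(n)`. -/
lemma tm_four_mul_add_eq_iff {r : ℕ} (hr : r ≤ 3) (m n : ℕ) :
    tm (4 * m + r) = tm (4 * n + (3 - r)) ↔ tm m = tm n := by
  have := tm_le_one m
  have := tm_le_one n
  interval_cases r <;>
    simp only [Nat.add_zero, Nat.sub_zero, Nat.sub_self, tm_four_mul, tm_four_mul_add_one,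
      tm_four_mul_add_two, tm_four_mul_add_three] <;> omega

lemma odd_of_tm_eq_tm_succ {c : ℕ} (h : tm c = tm (c + 1)) : c % 2 = 1 := by
  obtain ⟨d, rfl | rfl⟩ := Nat.even_or_odd' c
  · rw [tm_two_mul, tm_two_mul_add_one] at h
    have := tm_le_one d
    omega
  · omega

lemma not_tm_cube (e : ℕ) : ¬(tm e = tm (e + 1) ∧ tm (e + 1) = tm (e + 2)) := by
  rintro ⟨h₁, h₂⟩
  have := odd_of_tm_eq_tm_succ h₁
  have := odd_of_tm_eq_tm_succ h₂
  omega

lemma not_tm_palindrome_five (d : ℕ) : ¬(tm (d + 1) = tm (d + 3) ∧ tm d = tm (d + 4)) := by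
  rintro ⟨h₁, h₂⟩
  obtain ⟨e, rfl | rfl⟩ := Nat.even_or_odd' d
  · apply not_tm_cube e
    rw [tm_two_mul_add_one, show 2 * e + 3 = 2 * (e + 1) + 1 by ring, tm_two_mul_add_one] at h₁
    rw [tm_two_mul, show 2 * e + 4 = 2 * (e + 2) by ring, tm_two_mul] at h₂
    have := tm_le_one e
    have := tm_le_one (e + 1)
    omega
  · apply not_tm_cube e
    rw [show 2 * e + 1 + 1 = 2 * (e + 1) by ring, show 2 * e + 1 + 3 = 2 * (e + 2) by ring,
      tm_two_mul, tm_two_mul] at h₁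
    rw [tm_two_mul_add_one, show 2 * e + 1 + 4 = 2 * (e + 2) + 1 by ring,
      tm_two_mul_add_one] at h₂
    have := tm_le_one e
    have := tm_le_one (e + 2)
    omega

lemma IsPalDecomp.append {u v : List ℕ} {ps qs : List (List ℕ)} (hu : IsPalDecomp u ps)
    (hv : IsPalDecomp v qs) : IsPalDecomp (u ++ v) (ps ++ qs) :=
  ⟨by rw [List.flatten_append, hu.1, hv.1], fun p hp =>
    (List.mem_append.mp hp).elim (hu.2 p) (hv.2 p)⟩

lemma palLen_le {w : List ℕ} {ps : List (List ℕ)} (h : IsPalDecomp w ps) :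
    palLen w ≤ ps.length :=
  Nat.sInf_le ⟨ps, rfl, h⟩

lemma exists_isPalDecomp_length_eq_palLen (w : List ℕ) :
    ∃ ps, IsPalDecomp w ps ∧ ps.length = palLen w := by
  have hsingletons : IsPalDecomp w (w.map fun a => [a]) := by
    refine ⟨by rw [← List.flatMap_def, List.flatMap_singleton'], ?_⟩
    simp only [List.mem_map]
    rintro _ ⟨a, -, rfl⟩
    exact ⟨List.cons_ne_nil a [], List.Palindrome.singleton a⟩
  have hne : {k | ∃ ps, ps.length = k ∧ IsPalDecomp w ps}.Nonempty :=
    ⟨_, _, rfl, hsingletons⟩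
  obtain ⟨ps, hlen, hps⟩ := Nat.sInf_mem hne
  exact ⟨ps, hps, hlen⟩

lemma palLen_append_le (u v : List ℕ) : palLen (u ++ v) ≤ palLen u + palLen v := by
  obtain ⟨ps, hps, hps_len⟩ := exists_isPalDecomp_length_eq_palLen u
  obtain ⟨qs, hqs, hqs_len⟩ := exists_isPalDecomp_length_eq_palLen v
  simpa [hps_len, hqs_len] using palLen_le (hps.append hqs)

lemma palLen_le_one_of_palindrome {p : List ℕ} (hp : p.Palindrome) : palLen p ≤ 1 := by
  rcases eq_or_ne p [] with rfl | hne
  · exact (palLen_le (w := []) (ps := []) ⟨rfl, by simp⟩).trans zero_le_one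
  · exact palLen_le (ps := [p]) ⟨List.flatten_singleton, by simpa using ⟨hne, hp⟩⟩

lemma palLen_dropLast_le_two {p : List ℕ} (hp : p.Palindrome) : palLen p.dropLast ≤ 2 := by
  cases hp with
  | nil => exact (palLen_le_one_of_palindrome .nil).trans one_le_two
  | singleton x => exact (palLen_le_one_of_palindrome .nil).trans one_le_two
  | cons_concat x hs =>
    rw [List.dropLast_cons_of_ne_nil (by simp), List.dropLast_concat, ← List.singleton_append]
    exact (palLen_append_le _ _).trans
      (add_le_add (palLen_le_one_of_palindrome (.singleton x)) (palLen_le_one_of_palindrome hs))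

lemma palLen_le_palLen_append_singleton (w : List ℕ) (x : ℕ) :
    palLen w ≤ palLen (w ++ [x]) + 1 := by
  obtain ⟨ps, hps, hlen⟩ := exists_isPalDecomp_length_eq_palLen (w ++ [x])
  obtain rfl | ⟨qs, p, rfl⟩ := List.eq_nil_or_concat' ps
  · simpa using hps.1
  have hp := hps.2 p (by simp)
  have hw : w = qs.flatten ++ p.dropLast := by
    rw [← List.dropLast_append_of_ne_nil hp.1, ← List.flatten_concat, hps.1,
      List.dropLast_concat]
  have hqs : IsPalDecomp qs.flatten qs := ⟨rfl, fun q hq => hps.2 q (by simp [hq])⟩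
  calc palLen w ≤ palLen qs.flatten + palLen p.dropLast := hw ▸ palLen_append_le _ _
    _ ≤ qs.length + 2 := add_le_add (palLen_le hqs) (palLen_dropLast_le_two hp.2)
    _ = palLen (w ++ [x]) + 1 := by simp [← hlen]

def tmMorph (w : List ℕ) : List ℕ :=
  w.flatMap fun x => [x, 1 - x, 1 - x, x]

lemma tmMorph_palindrome {w : List ℕ} (hw : w.Palindrome) : (tmMorph w).Palindrome := by
  rw [List.Palindrome.iff_reverse_eq, tmMorph, List.reverse_flatMap, hw.reverse_eq]
  simp [Function.comp_def]

lemma tmMorph_flatten (ps : List (List ℕ)) : (ps.map tmMorph).flatten = tmMorph ps.flatten := by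
  induction ps <;> simp_all [tmMorph]

lemma palLen_tmMorph_le (w : List ℕ) : palLen (tmMorph w) ≤ palLen w := by
  obtain ⟨ps, hps, hlen⟩ := exists_isPalDecomp_length_eq_palLen w
  have hdec : IsPalDecomp (tmMorph w) (ps.map tmMorph) := by
    refine ⟨?_, ?_⟩
    · rw [tmMorph_flatten, hps.1]
    · simp only [List.mem_map]
      rintro _ ⟨p, hp, rfl⟩
      obtain ⟨hne, hpal⟩ := hps.2 p hp
      obtain ⟨x, xs, rfl⟩ := List.exists_cons_of_ne_nil hne
      exact ⟨by simp [tmMorph], tmMorph_palindrome hpal⟩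
  simpa [hlen] using palLen_le hdec

def tmPrefix (n : ℕ) : List ℕ := (List.range n).map tm

def tmFactor (a b : ℕ) : List ℕ := (List.range' a (b - a)).map tm

lemma pplTM_eq_palLen_tmPrefix (n : ℕ) : pplTM n = palLen (tmPrefix n) := rfl

@[simp] lemma length_tmPrefix (n : ℕ) : (tmPrefix n).length = n := by simp [tmPrefix]

lemma tmPrefix_append_tmFactor {a b : ℕ} (hab : a ≤ b) :
    tmPrefix a ++ tmFactor a b = tmPrefix b := by
  rw [tmPrefix, tmPrefix, tmFactor, ← List.map_append, List.range_eq_range', List.range_eq_range']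
  have := List.range'_append (s := 0) (m := a) (n := b - a) (step := 1)
  rw [zero_add, one_mul, Nat.add_sub_cancel' hab] at this
  rw [this]

lemma tmPrefix_succ (n : ℕ) : tmPrefix (n + 1) = tmPrefix n ++ [tm n] := by
  simp [tmPrefix, List.range_succ]

lemma tmPrefix_four_mul (n : ℕ) : tmPrefix (4 * n) = tmMorph (tmPrefix n) := by
  induction n with
  | zero => rfl
  | succ n ih =>
    rw [show 4 * (n + 1) = 4 * n + 3 + 1 by ring]
    simp [tmPrefix_succ, ih, tmMorph, tm_four_mul, tm_four_mul_add_one, tm_four_mul_add_two,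
      tm_four_mul_add_three]

/-- The factor `t(j) … t(k-1)` is a palindrome. -/
def IsTMPal (j k : ℕ) : Prop :=
  ∀ x y, j ≤ x → x < k → x + y + 1 = j + k → tm x = tm y

lemma isTMPal_iff_palindrome (j k : ℕ) : IsTMPal j k ↔ (tmFactor j k).Palindrome := by
  rw [List.Palindrome.iff_reverse_eq, tmFactor, ← List.map_reverse, List.reverse_range']
  constructor
  · intro h
    refine List.ext_getElem (by simp) fun i h₁ h₂ => ?_
    simp only [List.length_map, List.length_range] at h₁
    simp only [List.getElem_map, List.getElem_range, List.getElem_range']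
    exact h _ _ (by omega) (by omega) (by omega)
  · intro h x y hjx hxk hxy
    have := List.getElem_of_eq h (i := x - j) (by simp; omega)
    simp only [List.getElem_map, List.getElem_range, List.getElem_range'] at this
    rwa [show j + (k - j) - 1 - (x - j) = y by omega, show j + 1 * (x - j) = x by omega,
      eq_comm] at this

lemma IsTMPal.inner {j k : ℕ} (h : IsTMPal j k) : IsTMPal (j + 1) (k - 1) :=
  fun x y hjx hxk hxy => h x y (by omega) (by omega) (by omega)

lemma isTMPal_self_succ (n : ℕ) : IsTMPal n (n + 1) :=
  fun x y hx hx' hxy => by rw [show y = x by omega]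

lemma pplTM_le_of_isTMPal {j k : ℕ} (hjk : j ≤ k) (h : IsTMPal j k) :
    pplTM k ≤ pplTM j + 1 := by
  rw [pplTM_eq_palLen_tmPrefix, pplTM_eq_palLen_tmPrefix, ← tmPrefix_append_tmFactor hjk]
  exact (palLen_append_le _ _).trans
    (add_le_add le_rfl (palLen_le_one_of_palindrome ((isTMPal_iff_palindrome j k).mp h)))

lemma pplTM_succ_le (n : ℕ) : pplTM (n + 1) ≤ pplTM n + 1 :=
  pplTM_le_of_isTMPal n.le_succ (isTMPal_self_succ n)

lemma pplTM_le_pplTM_succ_add_one (n : ℕ) : pplTM n ≤ pplTM (n + 1) + 1 := by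
  rw [pplTM_eq_palLen_tmPrefix, pplTM_eq_palLen_tmPrefix, tmPrefix_succ]
  exact palLen_le_palLen_append_singleton _ _

lemma pplTM_four_mul_le (n : ℕ) : pplTM (4 * n) ≤ pplTM n := by
  rw [pplTM_eq_palLen_tmPrefix, pplTM_eq_palLen_tmPrefix, tmPrefix_four_mul]
  exact palLen_tmMorph_le _

lemma IsTMPal.length_le_three_of_odd {j k : ℕ} (h : IsTMPal j k) (hjk : j < k)
    (hodd : (k - j) % 2 = 1) : k - j ≤ 3 := by
  by_contra! hlong
  obtain ⟨d, hd⟩ : ∃ d, j + k = 2 * d + 5 := ⟨(j + k - 5) / 2, by omega⟩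
  exact not_tm_palindrome_five d
    ⟨h _ _ (by omega) (by omega) (by omega), h _ _ (by omega) (by omega) (by omega)⟩

lemma IsTMPal.add_mod_four_of_even {j k : ℕ} (h : IsTMPal j k) (hjk : j < k)
    (heven : (k - j) % 2 = 0) : (j + k) % 4 = 0 := by
  obtain ⟨c, hc⟩ : ∃ c, j + k = 2 * c + 2 := ⟨(j + k - 2) / 2, by omega⟩
  have := odd_of_tm_eq_tm_succ (h c (c + 1) (by omega) (by omega) (by omega))
  omega

lemma IsTMPal.mod_four_ne_three_of_length_three {j k : ℕ} (h : IsTMPal j k) (hjk : j + 3 = k) :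
    k % 4 ≠ 3 := by
  intro hk
  obtain ⟨n, rfl⟩ : ∃ n, j = 4 * n := ⟨j / 4, by omega⟩
  have := h (4 * n) (4 * n + 2) le_rfl (by omega) (by omega)
  rw [tm_four_mul, tm_four_mul_add_two] at this
  have := tm_le_one n
  omega

/-- Desubstitution: a palindrome of `t` centred at the even position `(j + k) / 2` is, up to at
most three letters at each end, the image of `t(a) … t(n-1)` under `0 ↦ 0110, 1 ↦ 1001`. -/
lemma IsTMPal.desubst {j k a n : ℕ} (h : IsTMPal j k) (hjk : j < k) (hsum : j + k = 4 * (a + n))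
    (hja : 4 * a ≤ j) (hja' : j < 4 * a + 4) : IsTMPal a n := by
  intro x y hax hxn hxy
  obtain ⟨r, hr, hjr, hrk⟩ : ∃ r ≤ 3, j ≤ 4 * x + r ∧ 4 * x + r < k := by
    by_cases hx : x = a
    · exact ⟨j - 4 * a, by omega, by omega, by omega⟩
    · exact ⟨0, by omega, by omega, by omega⟩
  rw [← tm_four_mul_add_eq_iff hr]
  exact h _ _ hjr hrk (by omega)

noncomputable def pplRec (k : ℕ) : ℕ :=
  if k % 4 = 0 then pplTM (k / 4)
  else if k % 4 = 1 then pplTM (k / 4) + 1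
  else if k % 4 = 2 then min (pplTM (k / 4)) (pplTM (k / 4 + 1)) + 2
  else min (pplTM (k / 4) + 2) (pplTM (k / 4 + 1) + 1)

@[simp] lemma pplRec_four_mul (n : ℕ) : pplRec (4 * n) = pplTM n := by
  simp [pplRec, show 4 * n % 4 = 0 by omega]

@[simp] lemma pplRec_four_mul_add_one (n : ℕ) : pplRec (4 * n + 1) = pplTM n + 1 := by
  simp [pplRec, show (4 * n + 1) % 4 = 1 by omega, show (4 * n + 1) / 4 = n by omega]

@[simp] lemma pplRec_four_mul_add_two (n : ℕ) :
    pplRec (4 * n + 2) = min (pplTM n) (pplTM (n + 1)) + 2 := by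
  simp [pplRec, show (4 * n + 2) % 4 = 2 by omega, show (4 * n + 2) / 4 = n by omega]

@[simp] lemma pplRec_four_mul_add_three (n : ℕ) :
    pplRec (4 * n + 3) = min (pplTM n + 2) (pplTM (n + 1) + 1) := by
  simp [pplRec, show (4 * n + 3) % 4 = 3 by omega, show (4 * n + 3) / 4 = n by omega]

lemma exists_four_mul_add (k : ℕ) :
    ∃ n, k = 4 * n ∨ k = 4 * n + 1 ∨ k = 4 * n + 2 ∨ k = 4 * n + 3 :=
  ⟨k / 4, by omega⟩

lemma pplRec_succ_le (k : ℕ) : pplRec (k + 1) ≤ pplRec k + 1 := by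
  obtain ⟨n, rfl | rfl | rfl | rfl⟩ := exists_four_mul_add k
  · simp only [pplRec_four_mul_add_one, pplRec_four_mul, le_refl]
  · simp only [pplRec_four_mul_add_two, pplRec_four_mul_add_one]
    omega
  · simp only [pplRec_four_mul_add_three, pplRec_four_mul_add_two]
    omega
  · rw [show 4 * n + 3 + 1 = 4 * (n + 1) by ring, pplRec_four_mul, pplRec_four_mul_add_three]
    have := pplTM_succ_le n
    omega

lemma pplRec_add_three_le {k : ℕ} (hk : (k + 3) % 4 ≠ 3) : pplRec (k + 3) ≤ pplRec k + 1 := by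
  obtain ⟨n, rfl | rfl | rfl | rfl⟩ := exists_four_mul_add k
  · omega
  all_goals have := pplTM_succ_le n
  · rw [show 4 * n + 1 + 3 = 4 * (n + 1) by ring, pplRec_four_mul, pplRec_four_mul_add_one]
    omega
  · rw [show 4 * n + 2 + 3 = 4 * (n + 1) + 1 by ring, pplRec_four_mul_add_one,
      pplRec_four_mul_add_two]
    omega
  · have := pplTM_succ_le (n + 1)
    rw [show 4 * n + 3 + 3 = 4 * (n + 1) + 2 by ring, pplRec_four_mul_add_two,
      pplRec_four_mul_add_three]
    omega

lemma pplRec_le_of_isTMPal_of_even {j k : ℕ} (h : IsTMPal j k) (hjk : j < k)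
    (h4 : (j + k) % 4 = 0) : pplRec k ≤ pplRec j + 1 := by
  obtain ⟨n, rfl | rfl | rfl | rfl⟩ := exists_four_mul_add k
  · obtain ⟨a, rfl⟩ : ∃ a, j = 4 * a := ⟨j / 4, by omega⟩
    have hdesubst : IsTMPal a n := h.desubst hjk (by ring) le_rfl (by omega)
    have := pplTM_le_of_isTMPal (by omega) hdesubst
    simp only [pplRec_four_mul]
    omega
  · obtain ⟨a, rfl⟩ : ∃ a, j = 4 * a + 3 := ⟨j / 4, by omega⟩
    have hout : IsTMPal a (n + 1) := h.desubst hjk (by ring) (by omega) (by omega)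
    have hin : IsTMPal (a + 1) n := hout.inner
    have := pplTM_le_of_isTMPal (by omega) hout
    have := pplTM_le_of_isTMPal (by omega) hin
    have := pplTM_le_pplTM_succ_add_one n
    simp only [pplRec_four_mul_add_one, pplRec_four_mul_add_three]
    omega
  · obtain ⟨a, rfl⟩ : ∃ a, j = 4 * a + 2 := ⟨j / 4, by omega⟩
    have hout : IsTMPal a (n + 1) := h.desubst hjk (by ring) (by omega) (by omega)
    have hin : IsTMPal (a + 1) n := hout.inner
    have := pplTM_le_of_isTMPal (by omega) hout
    have := pplTM_le_of_isTMPal (by omega) hin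
    simp only [pplRec_four_mul_add_two]
    omega
  · obtain ⟨a, rfl⟩ : ∃ a, j = 4 * a + 1 := ⟨j / 4, by omega⟩
    have hout : IsTMPal a (n + 1) := h.desubst hjk (by ring) (by omega) (by omega)
    have := pplTM_le_of_isTMPal (by omega) hout
    simp only [pplRec_four_mul_add_one, pplRec_four_mul_add_three]
    omega

lemma pplRec_le_of_isTMPal {j k : ℕ} (h : IsTMPal j k) (hjk : j < k) :
    pplRec k ≤ pplRec j + 1 := by
  rcases Nat.mod_two_eq_zero_or_one (k - j) with heven | hodd
  · exact pplRec_le_of_isTMPal_of_even h hjk (h.add_mod_four_of_even hjk heven)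
  · have := h.length_le_three_of_odd hjk hodd
    obtain rfl | rfl : k = j + 1 ∨ k = j + 3 := by omega
    · exact pplRec_succ_le j
    · exact pplRec_add_three_le (h.mod_four_ne_three_of_length_three rfl)

lemma IsPalDecomp.exists_isTMPal_of_append {k : ℕ} {qs : List (List ℕ)} {p : List ℕ}
    (h : IsPalDecomp (tmPrefix k) (qs ++ [p])) :
    ∃ j < k, j + p.length = k ∧ IsPalDecomp (tmPrefix j) qs ∧ IsTMPal j k := by
  obtain ⟨hne, hpal⟩ := h.2 p (by simp)
  have hflat : qs.flatten ++ p = tmPrefix k := by rw [← h.1, List.flatten_concat]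
  have hlen : qs.flatten.length + p.length = k := by simpa using congrArg List.length hflat
  obtain ⟨hqs, hp⟩ := List.append_inj
    (hflat.trans (tmPrefix_append_tmFactor (a := qs.flatten.length) (by omega)).symm) (by simp)
  refine ⟨_, ?_, hlen, ⟨hqs, fun q hq => h.2 q (by simp [hq])⟩, ?_⟩
  · have := List.length_pos_iff.mpr hne
    omega
  · rw [isTMPal_iff_palindrome, ← hp]
    exact hpal

theorem pplRec_le_length {k : ℕ} {ps : List (List ℕ)} (h : IsPalDecomp (tmPrefix k) ps) :
    pplRec k ≤ ps.length := by
  induction k using Nat.strong_induction_on generalizing ps with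
  | _ k ih =>
  obtain rfl | ⟨qs, p, rfl⟩ := List.eq_nil_or_concat' ps
  · obtain rfl : k = 0 := by simpa using congrArg List.length h.1.symm
    exact (pplRec_four_mul 0).trans_le (palLen_le h)
  · obtain ⟨j, hjk, -, hqs, hpal⟩ := h.exists_isTMPal_of_append
    calc pplRec k ≤ pplRec j + 1 := pplRec_le_of_isTMPal hpal hjk
      _ ≤ qs.length + 1 := Nat.add_le_add_right (ih j hjk hqs) 1
      _ = (qs ++ [p]).length := by simp

/-- No optimal palindromic decomposition of the prefix of the Thue–Morse word
of length `4N + 1` ends with a palindrome of length 3. -/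
theorem pplTM_4N1_no_length_three_end (N : ℕ) (ps : List (List ℕ))
    (hdec : IsPalDecomp ((List.range (4 * N + 1)).map tm) ps)
    (hopt : ps.length = pplTM (4 * N + 1)) :
    ∀ p, ps.getLast? = some p → p.length ≠ 3 := by
  intro p hlast hlen
  obtain ⟨qs, rfl⟩ := List.getLast?_eq_some_iff.mp hlast
  obtain ⟨j, -, hj, hqs, -⟩ := IsPalDecomp.exists_isTMPal_of_append (k := 4 * N + 1) hdec
  obtain ⟨n, rfl⟩ : ∃ n, N = n + 1 := ⟨N - 1, by omega⟩
  obtain rfl : j = 4 * n + 2 := by omega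
  have hlower := pplRec_le_length hqs
  have := pplTM_four_mul_le (n + 1)
  have := pplTM_succ_le (4 * (n + 1))
  have := pplTM_succ_le n
  simp only [pplRec_four_mul_add_two, List.length_append, List.length_singleton] at hlower hopt
  omega
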